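/- arXiv:1008.2465 — 2 statements merged into one kernel-verified Lean document; each statement's English description precedes it below -/
import Mathlib

section
/- In the setting of the previous lemma, additionally each diagonal (m×m)-block C_{jj} of C and D_{jj} of D equals either C_{11} or D_{11}, and for each j = 1,...,i one has C_{2^i,2^i}·A_j = A_j'·D_{2^i−2^{j−1}, 2^i−2^{j−1}}. -/
open Matrix MvPowerSeries

/-- The Knörrer-style inductively defined pair of `2^i × 2^i` matrices attached to two
sequences `u v : ℕ → S`: start with `([u 0], [v 0])` and at each step form
`([[φ, -v·1],[u·1, ψ]], [[ψ, v·1],[-u·1, φ]])`. -/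
def knorrerPair {S : Type} [CommRing S] (u v : ℕ → S) :
    (i : ℕ) → Matrix (Fin (2 ^ i)) (Fin (2 ^ i)) S × Matrix (Fin (2 ^ i)) (Fin (2 ^ i)) S
  | 0 => (Matrix.of fun _ _ => u 0, Matrix.of fun _ _ => v 0)
  | (i + 1) =>
    let p := knorrerPair u v i
    let e : Fin (2 ^ i) ⊕ Fin (2 ^ i) ≃ Fin (2 ^ (i + 1)) :=
      finSumFinEquiv.trans (finCongr (by rw [pow_succ, mul_two]))
    ((Matrix.reindex e e)
        (Matrix.fromBlocks p.1 ((-(v (i + 1))) • 1) ((u (i + 1)) • 1) p.2),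
     (Matrix.reindex e e)
        (Matrix.fromBlocks p.2 ((v (i + 1)) • 1) ((-(u (i + 1))) • 1) p.1))

/-- *Inflation*: given a ring homomorphism `ρ` from a commutative ring `R` into `m × m`
matrices over `k` (the image of a tuple of pairwise commuting matrices), a matrix with
entries in `R[[x's]]` is turned into a matrix of size `m` times bigger with entries in
`k[[x's]]`, by applying `ρ` to every coefficient of every entry. -/
noncomputable def inflate {k R : Type} [Field k] [CommRing R] {m : ℕ} {σ : Type}
    (ρ : R →+* Matrix (Fin m) (Fin m) k) {N : Type}
    (M : Matrix N N (MvPowerSeries σ R)) :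
    Matrix (N × Fin m) (N × Fin m) (MvPowerSeries σ k) :=
  Matrix.of fun p q =>
    (fun d => ρ (MvPowerSeries.coeff (R := R) d (M p.1 q.1)) p.2 q.2 : MvPowerSeries σ k)

/-!
Write `x₀ = X none` and `x_{t+1} = X (some t)`. Modulo `𝔪²` only the linear parts of `Φᵢ` and
`Ψᵢ` survive, because `u₀ = x₀²`, `h` and the `gⱼ` lie in `𝔪²`. The linear part of `Φᵢ` is the
signed incidence matrix `knorrerLinear`: its entry at `(q + 2ᵗ, q)`, for bit `t` of `q` clear, is
`±` the linear part `x_{t+1} - aₜ x₀` of `u_{t+1}`, and the linear part of `Ψᵢ` is its negative.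

Comparing `x_{t+1}`-coefficients in `C Φ = Φ' D` and `D Ψ = Ψ' C` gives, blockwise,
`C Nₜ = Nₜ D` and `D Nₜ = Nₜ C` for the signed shift `Nₜ` that sets bit `t`. Hence
`C_{pp} = D_{p-2ᵗ, p-2ᵗ}` and `D_{pp} = C_{p-2ᵗ, p-2ᵗ}` whenever bit `t` of `p` is set, and
clearing the bits of `p` one at a time gives (ii). The same relations force `D_{pq} = 0` when
bit `t` is set in `q` but not in `p`. So comparing `x₀`-coefficients at the entry
`(2ⁱ - 1, 2ⁱ - 2ʲ - 1)` leaves only the `j`-th term on each side, which is (iii).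
-/

namespace Nat

theorem add_two_pow_lt_two_pow {q t i : ℕ} (ht : t < i) (hq : q < 2 ^ i)
    (hb : q.testBit t = false) : q + 2 ^ t < 2 ^ i := by
  -- `q / 2 ^ t` is even and below the even number `2 ^ (i - t)`
  have hi : 2 ^ i = 2 ^ (i - t) * 2 ^ t := by rw [← pow_add, Nat.sub_add_cancel ht.le]
  have heven : 2 ^ (i - t) % 2 = 0 := by
    obtain ⟨s, hs⟩ := Nat.exists_eq_add_of_lt ht
    rw [show i - t = s + 1 by omega, pow_succ, Nat.mul_mod_left]
  have hlow : q / 2 ^ t % 2 = 0 := by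
    simpa [Nat.testBit_eq_decide_div_mod_eq] using hb
  rw [hi] at hq ⊢
  rw [← Nat.div_lt_iff_lt_mul (Nat.two_pow_pos t)] at hq ⊢
  rw [Nat.add_div_right _ (Nat.two_pow_pos t)]
  omega

theorem testBit_sub_two_pow_self {p t : ℕ} (hp : p.testBit t = true) :
    (p - 2 ^ t).testBit t = false := by
  have h := Nat.testBit_two_pow_add_eq (p - 2 ^ t) t
  rw [Nat.add_sub_cancel' (Nat.ge_two_pow_of_testBit hp), hp] at h
  simpa using h.symm

theorem two_pow_sub_two_pow_sub_one_lt (i j : ℕ) : 2 ^ i - 2 ^ j - 1 < 2 ^ i :=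
  (Nat.sub_le _ _).trans_lt (Nat.sub_lt (Nat.two_pow_pos i) (Nat.two_pow_pos j))

theorem testBit_two_pow_sub_two_pow_sub_one {i j : ℕ} (hj : j < i) (t : ℕ) :
    (2 ^ i - 2 ^ j - 1).testBit t = (decide (t < i) && !decide (j = t)) := by
  have hlt := Nat.pow_lt_pow_right (by norm_num : 1 < 2) hj
  rw [show 2 ^ i - 2 ^ j - 1 = 2 ^ i - (2 ^ j + 1) by omega, Nat.testBit_two_pow_sub_succ hlt,
    Nat.testBit_two_pow]

end Nat

def bitCountBetween (t i p : ℕ) : ℕ := Finset.card {l ∈ Finset.Ico (t + 1) i | p.testBit l}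

theorem bitCountBetween_self_succ (i p : ℕ) : bitCountBetween i (i + 1) p = 0 := by
  simp [bitCountBetween]

theorem bitCountBetween_succ_of_lt {t i p : ℕ} (ht : t < i) (hp : p < 2 ^ i) :
    bitCountBetween t (i + 1) p = bitCountBetween t i p := by
  rw [bitCountBetween, bitCountBetween, Nat.Ico_succ_right_eq_insert_Ico (by omega),
    Finset.filter_insert, if_neg (by simp [Nat.testBit_lt_two_pow hp])]

theorem bitCountBetween_succ_two_pow_add {t i x : ℕ} (ht : t < i) (hx : x < 2 ^ i) :
    bitCountBetween t (i + 1) (2 ^ i + x) = bitCountBetween t i x + 1 := by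
  rw [bitCountBetween, bitCountBetween, Nat.Ico_succ_right_eq_insert_Ico (by omega),
    Finset.filter_insert, if_pos (by simp [Nat.testBit_two_pow_add_eq, Nat.testBit_lt_two_pow hx]),
    Finset.card_insert_of_notMem (by simp)]
  congr 2
  refine Finset.filter_congr fun l hl => ?_
  rw [Nat.testBit_two_pow_add_gt (Finset.mem_Ico.mp hl).2]

def finSumFinTwoPow (i : ℕ) : Fin (2 ^ i) ⊕ Fin (2 ^ i) ≃ Fin (2 ^ (i + 1)) :=
  finSumFinEquiv.trans (finCongr (by rw [pow_succ, mul_two]))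

theorem finSumFinTwoPow_inl_val {i : ℕ} (x : Fin (2 ^ i)) :
    (finSumFinTwoPow i (Sum.inl x) : ℕ) = x := by
  simp [finSumFinTwoPow]

theorem finSumFinTwoPow_inr_val {i : ℕ} (x : Fin (2 ^ i)) :
    (finSumFinTwoPow i (Sum.inr x) : ℕ) = 2 ^ i + x := by
  simp [finSumFinTwoPow, add_comm]

theorem knorrerPair_succ {S : Type} [CommRing S] (u v : ℕ → S) (i : ℕ) :
    knorrerPair u v (i + 1) =
      (reindex (finSumFinTwoPow i) (finSumFinTwoPow i)
        (fromBlocks (knorrerPair u v i).1 (-v (i + 1) • 1) (u (i + 1) • 1)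
          (knorrerPair u v i).2),
       reindex (finSumFinTwoPow i) (finSumFinTwoPow i)
        (fromBlocks (knorrerPair u v i).2 (v (i + 1) • 1) (-u (i + 1) • 1)
          (knorrerPair u v i).1)) :=
  rfl

section KnorrerLinear

variable {A : Type*} [Ring A] {i : ℕ}

/-- The linear part of `(knorrerPair u v i).1` when `u (t + 1)` has linear part `c t`
(`knorrerPair_map`). -/
def knorrerLinear (c : ℕ → A) (i : ℕ) : Matrix (Fin (2 ^ i)) (Fin (2 ^ i)) A :=
  of fun p q => ∑ t : Fin i,
    if (p : ℕ) = q + 2 ^ (t : ℕ) ∧ (q : ℕ).testBit t = false then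
      (-1) ^ bitCountBetween t i p * c t
    else 0

theorem knorrerLinear_zero (c : ℕ → A) : knorrerLinear c 0 = 0 := by
  ext; simp [knorrerLinear]

theorem knorrerLinear_succ (c : ℕ → A) (i : ℕ) :
    knorrerLinear c (i + 1) = reindex (finSumFinTwoPow i) (finSumFinTwoPow i)
      (fromBlocks (knorrerLinear c i) 0 (c i • 1) (-knorrerLinear c i)) := by
  ext p q
  obtain ⟨x, rfl⟩ := (finSumFinTwoPow i).surjective p
  obtain ⟨y, rfl⟩ := (finSumFinTwoPow i).surjective q
  rcases x with x | x <;> rcases y with y | y <;>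
    simp only [reindex_apply, submatrix_apply, Equiv.symm_apply_apply, knorrerLinear, of_apply,
      Fin.sum_univ_castSucc, Fin.val_castSucc, Fin.val_last, finSumFinTwoPow_inl_val,
      finSumFinTwoPow_inr_val, fromBlocks_apply₁₁, fromBlocks_apply₁₂, fromBlocks_apply₂₁,
      fromBlocks_apply₂₂, Matrix.zero_apply, Matrix.neg_apply, Matrix.smul_apply, Matrix.one_apply]
  · have hx := x.2
    rw [if_neg fun h => by have := h.1; omega, add_zero]
    refine Finset.sum_congr rfl fun t _ => ?_
    rw [bitCountBetween_succ_of_lt t.2 hx]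
  · have hx := x.2
    rw [Finset.sum_eq_zero fun t _ => if_neg fun h => by
        have := h.1; have := Nat.two_pow_pos (t : ℕ); omega,
      if_neg fun h => by have := h.1; omega, add_zero]
  · rw [Finset.sum_eq_zero fun t _ => if_neg fun h =>
      (Nat.add_two_pow_lt_two_pow t.2 y.2 h.2).not_ge (by omega), zero_add]
    simp only [Nat.testBit_lt_two_pow y.2, bitCountBetween_self_succ, and_true, pow_zero,
      one_mul, smul_eq_mul, mul_ite, mul_one, mul_zero, Fin.ext_iff, add_comm,
      Nat.add_right_cancel_iff]
  · have hx := x.2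
    rw [if_neg fun h => by have := h.1; omega, add_zero, ← Finset.sum_neg_distrib]
    refine Finset.sum_congr rfl fun t _ => ?_
    simp only [Nat.testBit_two_pow_add_gt t.2, bitCountBetween_succ_two_pow_add t.2 hx,
      add_assoc, Nat.add_left_cancel_iff, pow_succ]
    split_ifs
    · noncomm_ring
    · rw [neg_zero]

theorem map_knorrerLinear {B : Type*} [Ring B] (f : A →+* B) (c : ℕ → A) :
    (knorrerLinear c i).map f = knorrerLinear (fun t => f (c t)) i := by
  ext p q
  simp [knorrerLinear, apply_ite f]

theorem mul_knorrerLinear_apply (M : Matrix (Fin (2 ^ i)) (Fin (2 ^ i)) A) (c : ℕ → A)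
    (p q : Fin (2 ^ i)) :
    (M * knorrerLinear c i) p q = ∑ t : Fin i,
      if h : (q : ℕ).testBit t = false then
        M p ⟨q + 2 ^ (t : ℕ), Nat.add_two_pow_lt_two_pow t.2 q.2 h⟩ *
          ((-1) ^ bitCountBetween t i (q + 2 ^ (t : ℕ)) * c t)
      else 0 := by
  simp only [mul_apply, knorrerLinear, of_apply, Finset.mul_sum]
  rw [Finset.sum_comm]
  refine Finset.sum_congr rfl fun t _ => ?_
  split_ifs with hb
  · rw [Fintype.sum_eq_single ⟨q + 2 ^ (t : ℕ), Nat.add_two_pow_lt_two_pow t.2 q.2 hb⟩]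
    · simp [hb]
    · intro r hr
      rw [if_neg fun h => hr (Fin.ext h.1), mul_zero]
  · exact Finset.sum_eq_zero fun r _ => by rw [if_neg fun h => hb h.2, mul_zero]

theorem knorrerLinear_mul_apply (M : Matrix (Fin (2 ^ i)) (Fin (2 ^ i)) A) (c : ℕ → A)
    (p q : Fin (2 ^ i)) :
    (knorrerLinear c i * M) p q = ∑ t : Fin i,
      if (p : ℕ).testBit t = true then
        (-1) ^ bitCountBetween t i p * c t *
          M ⟨p - 2 ^ (t : ℕ), (Nat.sub_le _ _).trans_lt p.2⟩ q
      else 0 := by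
  simp only [mul_apply, knorrerLinear, of_apply, Finset.sum_mul]
  rw [Finset.sum_comm]
  refine Finset.sum_congr rfl fun t _ => ?_
  split_ifs with hb
  · have hle := Nat.ge_two_pow_of_testBit hb
    rw [Fintype.sum_eq_single ⟨p - 2 ^ (t : ℕ), (Nat.sub_le _ _).trans_lt p.2⟩]
    · rw [if_pos ⟨(Nat.sub_add_cancel hle).symm, Nat.testBit_sub_two_pow_self hb⟩]
    · intro r hr
      rw [if_neg fun h => hr (Fin.ext (by simp only; omega)), zero_mul]
  · refine Finset.sum_eq_zero fun r _ => ?_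
    rw [if_neg, zero_mul]
    rintro ⟨h, hr⟩
    apply hb
    rw [h, add_comm, Nat.testBit_two_pow_add_eq, hr, Bool.not_false]

variable {w : ℕ}

theorem mul_knorrerLinear_single_apply (hw : w < i) (M : Matrix (Fin (2 ^ i)) (Fin (2 ^ i)) A)
    (p q : Fin (2 ^ i)) :
    (M * knorrerLinear (Pi.single w 1 : ℕ → A) i) p q =
      if h : (q : ℕ).testBit w = false then
        M p ⟨q + 2 ^ w, Nat.add_two_pow_lt_two_pow hw q.2 h⟩ *
          (-1) ^ bitCountBetween w i (q + 2 ^ w)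
      else 0 := by
  rw [mul_knorrerLinear_apply, Fintype.sum_eq_single ⟨w, hw⟩ fun t ht => ?_]
  · simp
  · have ht' : (t : ℕ) ≠ w := fun h => ht (Fin.ext h)
    simp [ht']

theorem knorrerLinear_single_mul_apply (hw : w < i) (M : Matrix (Fin (2 ^ i)) (Fin (2 ^ i)) A)
    (p q : Fin (2 ^ i)) :
    (knorrerLinear (Pi.single w 1 : ℕ → A) i * M) p q =
      if (p : ℕ).testBit w = true then
        (-1) ^ bitCountBetween w i p * M ⟨p - 2 ^ w, (Nat.sub_le _ _).trans_lt p.2⟩ q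
      else 0 := by
  rw [knorrerLinear_mul_apply, Fintype.sum_eq_single ⟨w, hw⟩ fun t ht => ?_]
  · simp
  · have ht' : (t : ℕ) ≠ w := fun h => ht (Fin.ext h)
    simp [ht']

variable {Cb Db : Matrix (Fin (2 ^ i)) (Fin (2 ^ i)) A}

theorem eq_zero_of_mul_knorrerLinear_single_eq (hw : w < i)
    (h : Cb * knorrerLinear (Pi.single w 1 : ℕ → A) i = knorrerLinear (Pi.single w 1) i * Db)
    {p q : Fin (2 ^ i)} (hp : (p : ℕ).testBit w = false) (hq : (q : ℕ).testBit w = true) :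
    Cb p q = 0 := by
  have hpq := congrFun₂ h p ⟨q - 2 ^ w, (Nat.sub_le _ _).trans_lt q.2⟩
  simp only [mul_knorrerLinear_single_apply hw, knorrerLinear_single_mul_apply hw,
    Nat.testBit_sub_two_pow_self hq, hp, Nat.sub_add_cancel (Nat.ge_two_pow_of_testBit hq)] at hpq
  exact (isUnit_neg_one.pow _).mul_left_eq_zero.mp hpq

theorem diag_eq_of_mul_knorrerLinear_single_eq (hw : w < i)
    (h : Cb * knorrerLinear (Pi.single w 1 : ℕ → A) i = knorrerLinear (Pi.single w 1) i * Db)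
    {p : Fin (2 ^ i)} (hp : (p : ℕ).testBit w = true) :
    Cb p p =
      Db ⟨p - 2 ^ w, (Nat.sub_le _ _).trans_lt p.2⟩ ⟨p - 2 ^ w, (Nat.sub_le _ _).trans_lt p.2⟩ := by
  have hpp := congrFun₂ h p ⟨p - 2 ^ w, (Nat.sub_le _ _).trans_lt p.2⟩
  simp only [mul_knorrerLinear_single_apply hw, knorrerLinear_single_mul_apply hw,
    Nat.testBit_sub_two_pow_self hp, hp, Nat.sub_add_cancel (Nat.ge_two_pow_of_testBit hp)] at hpp
  rw [((Commute.neg_one_left _).pow_left _).eq] at hpp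
  exact (isUnit_neg_one.pow _).mul_left_inj.mp hpp

theorem diag_eq_or_eq_of_mul_knorrerLinear_single_eq
    (hC : ∀ w < i,
      Cb * knorrerLinear (Pi.single w 1 : ℕ → A) i = knorrerLinear (Pi.single w 1) i * Db)
    (hD : ∀ w < i,
      Db * knorrerLinear (Pi.single w 1 : ℕ → A) i = knorrerLinear (Pi.single w 1) i * Cb)
    (p : Fin (2 ^ i)) :
    (Cb p p = Cb ⟨0, Nat.two_pow_pos i⟩ ⟨0, Nat.two_pow_pos i⟩ ∨
        Cb p p = Db ⟨0, Nat.two_pow_pos i⟩ ⟨0, Nat.two_pow_pos i⟩) ∧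
      (Db p p = Cb ⟨0, Nat.two_pow_pos i⟩ ⟨0, Nat.two_pow_pos i⟩ ∨
        Db p p = Db ⟨0, Nat.two_pow_pos i⟩ ⟨0, Nat.two_pow_pos i⟩) := by
  induction hn : (p : ℕ) using Nat.strong_induction_on generalizing p with
  | _ n ih =>
    obtain rfl | hn0 := eq_or_ne n 0
    · obtain rfl : p = ⟨0, Nat.two_pow_pos i⟩ := Fin.ext hn
      exact ⟨.inl rfl, .inr rfl⟩
    obtain ⟨w, hw, -⟩ := Nat.exists_most_significant_bit (hn ▸ hn0)
    have hle := Nat.ge_two_pow_of_testBit hw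
    have hwi : w < i := (Nat.pow_lt_pow_iff_right (by norm_num)).mp (hle.trans_lt p.2)
    rw [diag_eq_of_mul_knorrerLinear_single_eq hwi (hC w hwi) hw,
      diag_eq_of_mul_knorrerLinear_single_eq hwi (hD w hwi) hw]
    exact (ih _ (by have := Nat.two_pow_pos w; simp only; omega) _ rfl).symm

theorem corner_mul_eq_of_mul_knorrerLinear_eq {c c' : ℕ → A}
    (h : Cb * knorrerLinear c i = knorrerLinear c' i * Db)
    (hD : ∀ w < i,
      Db * knorrerLinear (Pi.single w 1 : ℕ → A) i = knorrerLinear (Pi.single w 1) i * Cb)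
    (j : Fin i) :
    Cb ⟨2 ^ i - 1, Nat.sub_one_lt (Nat.two_pow_pos i).ne'⟩
        ⟨2 ^ i - 1, Nat.sub_one_lt (Nat.two_pow_pos i).ne'⟩ * c j =
      c' j * Db ⟨2 ^ i - 2 ^ (j : ℕ) - 1, Nat.two_pow_sub_two_pow_sub_one_lt i j⟩
        ⟨2 ^ i - 2 ^ (j : ℕ) - 1, Nat.two_pow_sub_two_pow_sub_one_lt i j⟩ := by
  have hji := Nat.pow_lt_pow_right (by norm_num : 1 < 2) j.2
  have hpos := Nat.two_pow_pos (j : ℕ)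
  have hcorner := congrFun₂ h ⟨2 ^ i - 1, by omega⟩ ⟨2 ^ i - 2 ^ (j : ℕ) - 1, by omega⟩
  rw [mul_knorrerLinear_apply, knorrerLinear_mul_apply,
    Fintype.sum_eq_single j fun t ht => ?low, Fintype.sum_eq_single j fun t ht => ?high] at hcorner
  · have e1 : 2 ^ i - 2 ^ (j : ℕ) - 1 + 2 ^ (j : ℕ) = 2 ^ i - 1 := by omega
    have e2 : 2 ^ i - 1 - 2 ^ (j : ℕ) = 2 ^ i - 2 ^ (j : ℕ) - 1 := by omega
    simp only [Nat.testBit_two_pow_sub_two_pow_sub_one j.2, Nat.testBit_two_pow_sub_one, j.2,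
      decide_true, Bool.true_and, Bool.not_true, e1, e2, dite_true, if_true] at hcorner
    rw [← mul_assoc, ← ((Commute.neg_one_left _).pow_left _).eq, mul_assoc, mul_assoc] at hcorner
    exact (isUnit_neg_one.pow _).mul_right_inj.mp hcorner
  case low =>
    have hjt : (j : ℕ) ≠ t := fun h => ht (Fin.ext h.symm)
    rw [dif_neg (by simp [Nat.testBit_two_pow_sub_two_pow_sub_one j.2, hjt])]
  case high =>
    have hjt : (j : ℕ) ≠ t := fun h => ht (Fin.ext h.symm)
    rw [eq_zero_of_mul_knorrerLinear_single_eq t.2 (hD t t.2)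
      (Nat.testBit_sub_two_pow_self (by simp))
      (by simp [Nat.testBit_two_pow_sub_two_pow_sub_one j.2, hjt]), mul_zero, ite_self]

end KnorrerLinear

theorem Matrix.map_smul_one {n S T F : Type*} [Fintype n] [DecidableEq n] [Semiring S]
    [Semiring T] [FunLike F S T] [AddMonoidHomClass F S T] (L : F) (s : S) :
    (s • (1 : Matrix n n S)).map L = L s • 1 := by
  ext a b
  by_cases h : a = b <;> simp [h]

theorem knorrerPair_map {S : Type} {T F : Type*} [CommRing S] [Ring T] [FunLike F S T]
    [AddMonoidHomClass F S T] (u v : ℕ → S) (L : F) (hu : L (u 0) = 0) (hv : ∀ t, L (v t) = 0)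
    (i : ℕ) :
    (knorrerPair u v i).1.map L = knorrerLinear (fun t => L (u (t + 1))) i ∧
      (knorrerPair u v i).2.map L = -knorrerLinear (fun t => L (u (t + 1))) i := by
  induction i with
  | zero =>
    rw [knorrerLinear_zero, neg_zero]
    exact ⟨by ext; exact hu, by ext; exact hv 0⟩
  | succ i ih =>
    rw [knorrerPair_succ, knorrerLinear_succ]
    simp only [reindex_apply, ← submatrix_map, fromBlocks_map, ih.1, ih.2, Matrix.map_smul_one,
      map_neg, hv, neg_zero, zero_smul]
    refine ⟨trivial, ?_⟩
    ext p q
    rw [neg_apply, submatrix_apply, submatrix_apply, ← neg_apply, fromBlocks_neg, neg_neg,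
      neg_zero, neg_smul]

namespace MvPowerSeries

variable {σ R : Type*} [CommRing R]

theorem le_order_of_mem_span_X_pow {n : ℕ} {F : MvPowerSeries σ R}
    (hF : F ∈ Ideal.span (Set.range X) ^ n) : (n : ℕ∞) ≤ F.order := by
  induction n generalizing F with
  | zero => simp
  | succ n ih =>
    rw [pow_succ] at hF
    refine Submodule.mul_induction_on hF (fun x hx y hy => ?_) (fun x y hx hy => ?_)
    · have hy1 : 1 ≤ y.order := by
        refine one_le_order_iff_constCoeff_eq_zero.mpr ?_
        refine (Ideal.span_le (I := RingHom.ker constantCoeff)).mpr ?_ hy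
        rintro _ ⟨s, rfl⟩
        simp
      calc ((n + 1 : ℕ) : ℕ∞) = n + 1 := by push_cast; rfl
        _ ≤ x.order + y.order := add_le_add (ih hx) hy1
        _ ≤ (x * y).order := le_order_mul
    · exact (le_min hx hy).trans min_order_le_add

theorem coeff_single_one_eq_zero_of_mem_sq {F : MvPowerSeries σ R}
    (hF : F ∈ Ideal.span (Set.range X) ^ 2) (s : σ) : coeff (Finsupp.single s 1) F = 0 :=
  coeff_of_lt_order <| by
    rw [Finsupp.degree_single]
    exact lt_of_lt_of_le (by norm_num) (le_order_of_mem_span_X_pow hF)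

end MvPowerSeries

theorem coeff_inflate {k R : Type} [Field k] [CommRing R] {m : ℕ} {σ N : Type}
    (ρ : R →+* Matrix (Fin m) (Fin m) k) (M : Matrix N N (MvPowerSeries σ R)) (d : σ →₀ ℕ)
    (P Q : N × Fin m) : coeff d (inflate ρ M P Q) = ρ (coeff d (M P.1 Q.1)) P.2 Q.2 :=
  rfl

theorem comp_symm_mul_map_coeff_eq {k R R' : Type} [Field k] [CommRing R] [CommRing R'] {m : ℕ}
    {σ N : Type} [Fintype N] (ρ : R →+* Matrix (Fin m) (Fin m) k)
    (ρ' : R' →+* Matrix (Fin m) (Fin m) k) (M : Matrix N N (MvPowerSeries σ R))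
    (M' : Matrix N N (MvPowerSeries σ R')) (C D : Matrix (N × Fin m) (N × Fin m) k)
    (H : ∀ P Q, (C.map ⇑(MvPowerSeries.C (σ := σ) (R := k)) * inflate ρ M) P Q
        - (inflate ρ' M' * D.map ⇑(MvPowerSeries.C (σ := σ) (R := k))) P Q
        ∈ Ideal.span (Set.range X) ^ 2)
    (s : σ) :
    (comp N N (Fin m) (Fin m) k).symm C * (M.map (coeff (Finsupp.single s 1))).map ρ =
      (M'.map (coeff (Finsupp.single s 1))).map ρ' * (comp N N (Fin m) (Fin m) k).symm D := by
  ext p q α β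
  have h := coeff_single_one_eq_zero_of_mem_sq (H (p, α) (q, β)) s
  rw [map_sub, sub_eq_zero, mul_apply, mul_apply, map_sum, map_sum] at h
  simpa [mul_apply, Matrix.sum_apply, Fintype.sum_prod_type, coeff_inflate] using h

theorem comp_symm_mul_knorrerLinear_eq {k R R' : Type} [Field k] [CommRing R] [CommRing R']
    {m i : ℕ} {σ : Type} (ρ : R →+* Matrix (Fin m) (Fin m) k)
    (ρ' : R' →+* Matrix (Fin m) (Fin m) k) {u v : ℕ → MvPowerSeries σ R}
    {u' v' : ℕ → MvPowerSeries σ R'} (hu : u 0 ∈ Ideal.span (Set.range X) ^ 2)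
    (hv : ∀ t, v t ∈ Ideal.span (Set.range X) ^ 2) (hu' : u' 0 ∈ Ideal.span (Set.range X) ^ 2)
    (hv' : ∀ t, v' t ∈ Ideal.span (Set.range X) ^ 2)
    (C D : Matrix (Fin (2 ^ i) × Fin m) (Fin (2 ^ i) × Fin m) k)
    (hΦ : ∀ P Q,
      (C.map ⇑(MvPowerSeries.C (σ := σ) (R := k)) * inflate ρ (knorrerPair u v i).1) P Q -
          (inflate ρ' (knorrerPair u' v' i).1 * D.map ⇑(MvPowerSeries.C (σ := σ) (R := k))) P Q ∈
        Ideal.span (Set.range X) ^ 2)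
    (hΨ : ∀ P Q,
      (D.map ⇑(MvPowerSeries.C (σ := σ) (R := k)) * inflate ρ (knorrerPair u v i).2) P Q -
          (inflate ρ' (knorrerPair u' v' i).2 * C.map ⇑(MvPowerSeries.C (σ := σ) (R := k))) P Q ∈
        Ideal.span (Set.range X) ^ 2)
    (s : σ) :
    (comp _ _ _ _ k).symm C *
          knorrerLinear (fun t => ρ (coeff (Finsupp.single s 1) (u (t + 1)))) i =
        knorrerLinear (fun t => ρ' (coeff (Finsupp.single s 1) (u' (t + 1)))) i *
          (comp _ _ _ _ k).symm D ∧
      (comp _ _ _ _ k).symm D *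
          knorrerLinear (fun t => ρ (coeff (Finsupp.single s 1) (u (t + 1)))) i =
        knorrerLinear (fun t => ρ' (coeff (Finsupp.single s 1) (u' (t + 1)))) i *
          (comp _ _ _ _ k).symm C := by
  obtain ⟨hΦL, hΨL⟩ := knorrerPair_map u v (coeff (Finsupp.single s 1))
    (coeff_single_one_eq_zero_of_mem_sq hu s)
    (fun t => coeff_single_one_eq_zero_of_mem_sq (hv t) s) i
  obtain ⟨hΦL', hΨL'⟩ := knorrerPair_map u' v' (coeff (Finsupp.single s 1))
    (coeff_single_one_eq_zero_of_mem_sq hu' s)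
    (fun t => coeff_single_one_eq_zero_of_mem_sq (hv' t) s) i
  have hCD := comp_symm_mul_map_coeff_eq ρ ρ' _ _ C D hΦ s
  have hDC := comp_symm_mul_map_coeff_eq ρ ρ' _ _ D C hΨ s
  rw [hΦL, hΦL', map_knorrerLinear, map_knorrerLinear] at hCD
  rw [hΨL, hΨL', Matrix.map_neg _ (map_neg ρ), Matrix.map_neg _ (map_neg ρ'), map_knorrerLinear,
    map_knorrerLinear, mul_neg, neg_mul, neg_inj] at hDC
  exact ⟨hCD, hDC⟩

section Sequences

variable {S : Type} [CommRing S] {n : ℕ}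

-- The `let`-bound sequences `u` and `v` of `reduction_hom_diagonal_blocks` unfold to these.
noncomputable def knorrerU (a : Fin n → S) : ℕ → MvPowerSeries (Option (Fin n)) S
  | 0 => X none ^ 2
  | j + 1 => if hj : j < n then X (some ⟨j, hj⟩) - MvPowerSeries.C (a ⟨j, hj⟩) * X none else 0

def knorrerV (h : MvPowerSeries (Option (Fin n)) S) (g : Fin n → MvPowerSeries (Option (Fin n)) S) :
    ℕ → MvPowerSeries (Option (Fin n)) S
  | 0 => h
  | j + 1 => if hj : j < n then g ⟨j, hj⟩ else 0

theorem knorrerU_zero_mem (a : Fin n → S) : knorrerU a 0 ∈ Ideal.span (Set.range X) ^ 2 :=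
  Ideal.pow_mem_pow (Ideal.subset_span (Set.mem_range_self none)) 2

theorem knorrerV_mem {h : MvPowerSeries (Option (Fin n)) S}
    {g : Fin n → MvPowerSeries (Option (Fin n)) S} {I : Ideal (MvPowerSeries (Option (Fin n)) S)}
    (hh : h ∈ I) (hg : ∀ i, g i ∈ I) (t : ℕ) : knorrerV h g t ∈ I := by
  rcases t with _ | t
  · exact hh
  · simp only [knorrerV]
    split_ifs
    exacts [hg _, I.zero_mem]

theorem map_coeff_some_knorrerU {B : Type*} [Semiring B] (f : S →+* B) (a : Fin n → S)
    (w : Fin n) :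
    (fun t => f (coeff (Finsupp.single (some w) 1) (knorrerU a (t + 1)))) =
      Pi.single (w : ℕ) 1 := by
  funext t
  simp only [knorrerU]
  split_ifs with ht
  · simp [coeff_X, Finsupp.single_left_inj one_ne_zero, Pi.single_apply, Fin.ext_iff, eq_comm,
      apply_ite f]
  · have : t ≠ w := by omega
    simp [this]

theorem map_coeff_none_knorrerU {B : Type*} [Ring B] (f : S →+* B) (a : Fin n → S) :
    (fun t => f (coeff (Finsupp.single none 1) (knorrerU a (t + 1)))) =
      fun t => if ht : t < n then -f (a ⟨t, ht⟩) else 0 := by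
  funext t
  simp only [knorrerU]
  split_ifs <;> simp [coeff_X, Finsupp.single_left_inj one_ne_zero]

end Sequences

/-- Blocks are 0-indexed: the paper's `C_{2ⁱ,2ⁱ}` and `D_{2ⁱ-2^{j-1}, 2ⁱ-2^{j-1}}` are the blocks
at `2 ^ i - 1` and `2 ^ i - 2 ^ j - 1` for `j : Fin i`. -/
theorem reduction_hom_diagonal_blocks
    (k : Type) [Field k] (n m : ℕ)
    (R R' : Type) [CommRing R] [Algebra k R] [CommRing R'] [Algebra k R']
    (ρ : R →ₐ[k] Matrix (Fin m) (Fin m) k)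
    (ρ' : R' →ₐ[k] Matrix (Fin m) (Fin m) k)
    (a : Fin n → R) (a' : Fin n → R')
    (h : MvPowerSeries (Option (Fin n)) R) (g : Fin n → MvPowerSeries (Option (Fin n)) R)
    (hh : h ∈ (Ideal.span (Set.range
        (MvPowerSeries.X : Option (Fin n) → MvPowerSeries (Option (Fin n)) R))) ^ 2)
    (hg : ∀ i, g i ∈ (Ideal.span (Set.range
        (MvPowerSeries.X : Option (Fin n) → MvPowerSeries (Option (Fin n)) R))) ^ 3)
    (h' : MvPowerSeries (Option (Fin n)) R')
    (g' : Fin n → MvPowerSeries (Option (Fin n)) R')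
    (hh' : h' ∈ (Ideal.span (Set.range
        (MvPowerSeries.X : Option (Fin n) → MvPowerSeries (Option (Fin n)) R'))) ^ 2)
    (hg' : ∀ i, g' i ∈ (Ideal.span (Set.range
        (MvPowerSeries.X : Option (Fin n) → MvPowerSeries (Option (Fin n)) R'))) ^ 3)
    (i : ℕ) (hi : i ≤ n) :
    let u : ℕ → MvPowerSeries (Option (Fin n)) R := fun j =>
      match j with
      | 0 => (MvPowerSeries.X none) ^ 2
      | j + 1 => if hj : j < n then
          MvPowerSeries.X (some ⟨j, hj⟩)
            - MvPowerSeries.C (σ := Option (Fin n)) (R := R) (a ⟨j, hj⟩) * MvPowerSeries.X none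
        else 0
    let v : ℕ → MvPowerSeries (Option (Fin n)) R := fun j =>
      match j with
      | 0 => h
      | j + 1 => if hj : j < n then g ⟨j, hj⟩ else 0
    let Φ := inflate ρ.toRingHom (knorrerPair u v i).1
    let Ψ := inflate ρ.toRingHom (knorrerPair u v i).2
    let u' : ℕ → MvPowerSeries (Option (Fin n)) R' := fun j =>
      match j with
      | 0 => (MvPowerSeries.X none) ^ 2
      | j + 1 => if hj : j < n then
          MvPowerSeries.X (some ⟨j, hj⟩)
            - MvPowerSeries.C (σ := Option (Fin n)) (R := R') (a' ⟨j, hj⟩) * MvPowerSeries.X none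
        else 0
    let v' : ℕ → MvPowerSeries (Option (Fin n)) R' := fun j =>
      match j with
      | 0 => h'
      | j + 1 => if hj : j < n then g' ⟨j, hj⟩ else 0
    let Φ' := inflate ρ'.toRingHom (knorrerPair u' v' i).1
    let Ψ' := inflate ρ'.toRingHom (knorrerPair u' v' i).2
    ∀ C D : Matrix ((Fin (2 ^ i)) × Fin m) ((Fin (2 ^ i)) × Fin m) k,
      (∀ p q, (C.map ⇑(MvPowerSeries.C (σ := Option (Fin n)) (R := k)) * Φ) p q
              - (Φ' * D.map ⇑(MvPowerSeries.C (σ := Option (Fin n)) (R := k))) p q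
            ∈ (Ideal.span (Set.range
                (MvPowerSeries.X : Option (Fin n) → MvPowerSeries (Option (Fin n)) k))) ^ 2) →
      (∀ p q, (D.map ⇑(MvPowerSeries.C (σ := Option (Fin n)) (R := k)) * Ψ) p q
              - (Ψ' * C.map ⇑(MvPowerSeries.C (σ := Option (Fin n)) (R := k))) p q
            ∈ (Ideal.span (Set.range
                (MvPowerSeries.X : Option (Fin n) → MvPowerSeries (Option (Fin n)) k))) ^ 2) →
      (∀ j : Fin (2 ^ i),
        ((Matrix.of fun α β => C (j, α) (j, β)) =
            (Matrix.of fun α β => C ((⟨0, Nat.two_pow_pos i⟩ : Fin (2 ^ i)), α)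
              ((⟨0, Nat.two_pow_pos i⟩ : Fin (2 ^ i)), β)) ∨
          (Matrix.of fun α β => C (j, α) (j, β)) =
            (Matrix.of fun α β => D ((⟨0, Nat.two_pow_pos i⟩ : Fin (2 ^ i)), α)
              ((⟨0, Nat.two_pow_pos i⟩ : Fin (2 ^ i)), β))) ∧
        ((Matrix.of fun α β => D (j, α) (j, β)) =
            (Matrix.of fun α β => C ((⟨0, Nat.two_pow_pos i⟩ : Fin (2 ^ i)), α)
              ((⟨0, Nat.two_pow_pos i⟩ : Fin (2 ^ i)), β)) ∨
          (Matrix.of fun α β => D (j, α) (j, β)) =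
            (Matrix.of fun α β => D ((⟨0, Nat.two_pow_pos i⟩ : Fin (2 ^ i)), α)
              ((⟨0, Nat.two_pow_pos i⟩ : Fin (2 ^ i)), β)))) ∧
      (∀ j : Fin i,
        (Matrix.of fun α β =>
            C ((⟨2 ^ i - 1, by have := Nat.two_pow_pos i; omega⟩ : Fin (2 ^ i)), α)
              ((⟨2 ^ i - 1, by have := Nat.two_pow_pos i; omega⟩ : Fin (2 ^ i)), β))
            * ρ (a (Fin.castLE hi j)) =
          ρ' (a' (Fin.castLE hi j)) *
            (Matrix.of fun α β =>
              D ((⟨2 ^ i - 2 ^ (j : ℕ) - 1,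
                    by
                      have h1 := Nat.two_pow_pos i
                      have h2 := Nat.two_pow_pos (j : ℕ)
                      omega⟩ : Fin (2 ^ i)), α)
                ((⟨2 ^ i - 2 ^ (j : ℕ) - 1,
                    by
                      have h1 := Nat.two_pow_pos i
                      have h2 := Nat.two_pow_pos (j : ℕ)
                      omega⟩ : Fin (2 ^ i)), β))) := by
  intro u v Φ Ψ u' v' Φ' Ψ' C D hΦ hΨ
  have hCD := comp_symm_mul_knorrerLinear_eq ρ.toRingHom ρ'.toRingHom (knorrerU_zero_mem a)
    (knorrerV_mem hh fun j => Ideal.pow_le_pow_right (by norm_num) (hg j)) (knorrerU_zero_mem a')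
    (knorrerV_mem hh' fun j => Ideal.pow_le_pow_right (by norm_num) (hg' j)) C D hΦ hΨ
  have hshift : ∀ w < i,
      (comp _ _ _ _ k).symm C * knorrerLinear (Pi.single w 1) i =
          knorrerLinear (Pi.single w 1) i * (comp _ _ _ _ k).symm D ∧
        (comp _ _ _ _ k).symm D * knorrerLinear (Pi.single w 1) i =
          knorrerLinear (Pi.single w 1) i * (comp _ _ _ _ k).symm C :=
    fun w hw => by
      simpa only [map_coeff_some_knorrerU _ _ ⟨w, hw.trans_le hi⟩]
        using hCD (some ⟨w, hw.trans_le hi⟩)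
  refine ⟨diag_eq_or_eq_of_mul_knorrerLinear_single_eq (fun w hw => (hshift w hw).1)
    (fun w hw => (hshift w hw).2), fun j => ?_⟩
  have hnone := (hCD none).1
  rw [map_coeff_none_knorrerU, map_coeff_none_knorrerU] at hnone
  have hcorner := corner_mul_eq_of_mul_knorrerLinear_eq hnone (fun w hw => (hshift w hw).2) j
  rw [dif_pos (j.2.trans_le hi), dif_pos (j.2.trans_le hi), mul_neg, neg_mul, neg_inj] at hcorner
  exact hcorner
end

section
/- Let X_1,...,X_m be n×n matrices over a field k and B the mn×mn block matrix with diagonal blocks X_1,...,X_m and identity blocks on the subdiagonal; let B' be defined analogously from X_1',...,X_m'. If Σ = diag(σ_1,...,σ_m) is block-diagonal and ΣB = B'Σ, then σ_1 = σ_2 = ... = σ_m and σ_1 X_i = X_i' σ_1 for all i. -/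
/-!
Comparing the `(i, i)` blocks of `ΣB = B'Σ` gives `σ_i X_i = X_i' σ_i`, and comparing the
`(i + 1, i)` blocks, where `B` and `B'` carry identity blocks, gives `σ_{i+1} = σ_i`.
-/

open Matrix

theorem Fin.apply_eq_apply_of_apply_succ_eq {m : ℕ} {α : Type*} {f : Fin m → α}
    (h : ∀ i j : Fin m, (i : ℕ) = j + 1 → f i = f j) (i j : Fin m) : f i = f j := by
  cases m with
  | zero => exact i.elim0
  | succ m =>
    have hzero : ∀ i : Fin (m + 1), f i = f 0 := fun i =>
      Fin.induction rfl (fun i ih => (h i.succ i.castSucc rfl).trans ih) i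
    rw [hzero i, hzero j]

namespace Matrix

variable {ι κ R : Type*}

/-- Unlike `Matrix.blockDiagonal`, the block index is the *first* coordinate. -/
def blockDiagonalFst [DecidableEq ι] [Zero R] (σ : ι → Matrix κ κ R) :
    Matrix (ι × κ) (ι × κ) R :=
  of fun p q => if p.1 = q.1 then σ p.1 p.2 q.2 else 0

def blockLowerBidiagonal [DecidableEq κ] [Zero R] [One R] {m : ℕ} (X : Fin m → Matrix κ κ R) :
    Matrix (Fin m × κ) (Fin m × κ) R :=
  of fun p q => if p.1 = q.1 then X p.1 p.2 q.2
    else if (p.1 : ℕ) = (q.1 : ℕ) + 1 then (if p.2 = q.2 then 1 else 0) else 0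

section Mul

variable [DecidableEq ι] [Fintype ι] [Fintype κ] [NonUnitalNonAssocSemiring R]

theorem submatrix_blockDiagonalFst_mul (σ : ι → Matrix κ κ R) (M : Matrix (ι × κ) (ι × κ) R)
    (i j : ι) :
    (blockDiagonalFst σ * M).submatrix (Prod.mk i) (Prod.mk j) =
      σ i * M.submatrix (Prod.mk i) (Prod.mk j) := by
  ext a b
  simp only [submatrix_apply, mul_apply, Fintype.sum_prod_type, blockDiagonalFst, of_apply,
    ite_mul, zero_mul, Finset.sum_ite_irrel, Finset.sum_const_zero, Finset.sum_ite_eq,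
    Finset.mem_univ, if_true]

theorem submatrix_mul_blockDiagonalFst (σ : ι → Matrix κ κ R) (M : Matrix (ι × κ) (ι × κ) R)
    (i j : ι) :
    (M * blockDiagonalFst σ).submatrix (Prod.mk i) (Prod.mk j) =
      M.submatrix (Prod.mk i) (Prod.mk j) * σ j := by
  ext a b
  simp only [submatrix_apply, mul_apply, Fintype.sum_prod_type, blockDiagonalFst, of_apply,
    mul_ite, mul_zero, Finset.sum_ite_irrel, Finset.sum_const_zero, Finset.sum_ite_eq',
    Finset.mem_univ, if_true]

end Mul

section Bidiagonal

variable [DecidableEq κ] [Zero R] [One R] {m : ℕ} (X : Fin m → Matrix κ κ R)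

theorem submatrix_blockLowerBidiagonal_diag (i : Fin m) :
    (blockLowerBidiagonal X).submatrix (Prod.mk i) (Prod.mk i) = X i := by
  ext a b
  simp [blockLowerBidiagonal]

theorem submatrix_blockLowerBidiagonal_subdiag {i j : Fin m} (hij : (i : ℕ) = j + 1) :
    (blockLowerBidiagonal X).submatrix (Prod.mk i) (Prod.mk j) = 1 := by
  have hne : i ≠ j := fun h => by subst h; omega
  ext a b
  simp [blockLowerBidiagonal, hne, hij, one_apply]

end Bidiagonal

end Matrix

/-- Let `X_1,…,X_m` be `n × n` matrices over a field `k` and `B` the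
`mn × mn` block matrix with diagonal blocks `X_1,…,X_m` and identity blocks on the
subdiagonal; let `B'` be built analogously from `X_1',…,X_m'`.  If `Σ = diag(σ_1,…,σ_m)`
is block-diagonal and `ΣB = B'Σ`, then `σ_1 = ⋯ = σ_m` and `σ_1 X_i = X_i' σ_1` for all
`i`. -/
theorem block_diagonal_intertwiner_constant
    (k : Type) [Field k] (m n : ℕ)
    (X X' : Fin m → Matrix (Fin n) (Fin n) k)
    (σ : Fin m → Matrix (Fin n) (Fin n) k)
    (B B' Sg : Matrix (Fin m × Fin n) (Fin m × Fin n) k)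
    (hB : B = Matrix.of fun p q =>
      if p.1 = q.1 then X p.1 p.2 q.2
      else if (p.1 : ℕ) = (q.1 : ℕ) + 1 then (if p.2 = q.2 then 1 else 0) else 0)
    (hB' : B' = Matrix.of fun p q =>
      if p.1 = q.1 then X' p.1 p.2 q.2
      else if (p.1 : ℕ) = (q.1 : ℕ) + 1 then (if p.2 = q.2 then 1 else 0) else 0)
    (hSg : Sg = Matrix.of fun p q => if p.1 = q.1 then σ p.1 p.2 q.2 else 0)
    (hcomm : Sg * B = B' * Sg) :
    (∀ i j : Fin m, σ i = σ j) ∧ ∀ j i : Fin m, σ j * X i = X' i * σ j := by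
  subst hB hB' hSg
  change blockDiagonalFst σ * blockLowerBidiagonal X =
    blockLowerBidiagonal X' * blockDiagonalFst σ at hcomm
  have hblock (i j : Fin m) :
      σ i * (blockLowerBidiagonal X).submatrix (Prod.mk i) (Prod.mk j) =
        (blockLowerBidiagonal X').submatrix (Prod.mk i) (Prod.mk j) * σ j := by
    rw [← submatrix_blockDiagonalFst_mul, ← submatrix_mul_blockDiagonalFst, hcomm]
  have hconst : ∀ i j : Fin m, σ i = σ j :=
    Fin.apply_eq_apply_of_apply_succ_eq fun i j hij => by
      simpa [submatrix_blockLowerBidiagonal_subdiag _ hij] using hblock i j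
  refine ⟨hconst, fun j i => ?_⟩
  rw [hconst j i]
  simpa [submatrix_blockLowerBidiagonal_diag] using hblock i i
end
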